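/- Let G be a group acting sharply 2-transitively on a set X, with the action not of characteristic 2 (i.e., some involution of G has a fixed point in X). Then the set I_G of involutions of G has at least 2 elements and the conjugation action of G on I_G is sharply 2-transitive. -/

import Mathlib

/-!
In a sharply 2-transitive group two involutions that swap a pair of points are conjugated by any
element carrying the first pair to the second, so all involutions are conjugate. If one of them
has a fixed point, every involution therefore has one, and it is unique since only the identity
fixes two points. Two involutions sharing a fixed point coincide, so sending an involution to its
fixed point is a `G`-equivariant bijection from the involutions, under conjugation, onto `X`, and
sharp 2-transitivity transfers along it.
-/

/-- An involution of a group is an element of order 2. -/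
def IsInvolution {G : Type*} [Monoid G] (g : G) : Prop := orderOf g = 2

/-- A group `G` acts sharply 2-transitively on `X` if `X` has at least two elements and
any pair of distinct points of `X` is sent to any other such pair by a unique element of `G`. -/
def SharplyTwoTransitive (G X : Type*) [Group G] [MulAction G X] : Prop :=
  Nontrivial X ∧ ∀ x₁ x₂ y₁ y₂ : X, x₁ ≠ x₂ → y₁ ≠ y₂ →
    ∃! g : G, g • x₁ = y₁ ∧ g • x₂ = y₂
/-- The conjugation action of `G` on its set of involutions is sharply 2-transitive:
there are at least two involutions, and any ordered pair of distinct involutions is sent to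
any other such pair by conjugation by a unique element of `G`. -/
def InvolutionsSharplyTwoTransitive (G : Type*) [Group G] : Prop :=
  (∃ u v : G, IsInvolution u ∧ IsInvolution v ∧ u ≠ v) ∧
  ∀ u v u' v' : G, IsInvolution u → IsInvolution v → IsInvolution u' → IsInvolution v' →
    u ≠ v → u' ≠ v' → ∃! g : G, g * u * g⁻¹ = u' ∧ g * v * g⁻¹ = v'

namespace IsInvolution

variable {G : Type*} [Group G] {u : G}

lemma mul_self (hu : IsInvolution u) : u * u = 1 := by
  rw [← pow_two, ← hu, pow_orderOf_eq_one]

lemma ne_one (hu : IsInvolution u) : u ≠ 1 := by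
  rintro rfl
  simp [IsInvolution] at hu

lemma conj (hu : IsInvolution u) (g : G) : IsInvolution (g * u * g⁻¹) := by
  rw [IsInvolution, ← MulAut.conj_apply, MulEquiv.orderOf_eq]
  exact hu

lemma smul_smul {X : Type*} [MulAction G X] (hu : IsInvolution u) (x : X) : u • u • x = x := by
  rw [_root_.smul_smul, hu.mul_self, one_smul]

end IsInvolution

lemma conj_smul_smul_eq_self {G X : Type*} [Group G] [MulAction G X] {u : G} {x : X}
    (hx : u • x = x) (g : G) : (g * u * g⁻¹) • g • x = g • x := by
  rw [mul_smul, mul_smul, inv_smul_smul, hx]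

namespace SharplyTwoTransitive

variable {G X : Type*} [Group G] [MulAction G X]

lemma eq_of_smul_eq_of_smul_eq (h : SharplyTwoTransitive G X) {g₁ g₂ : G} {a b : X}
    (hab : a ≠ b) (ha : g₁ • a = g₂ • a) (hb : g₁ • b = g₂ • b) : g₁ = g₂ := by
  obtain ⟨g, -, huniq⟩ := h.2 a b (g₂ • a) (g₂ • b) hab ((MulAction.injective g₂).ne hab)
  rw [huniq g₁ ⟨ha, hb⟩, huniq g₂ ⟨rfl, rfl⟩]

lemma eq_one_of_smul_eq_self (h : SharplyTwoTransitive G X) {g : G} {a b : X} (hab : a ≠ b)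
    (ha : g • a = a) (hb : g • b = b) : g = 1 :=
  h.eq_of_smul_eq_of_smul_eq hab (ha.trans (one_smul G a).symm) (hb.trans (one_smul G b).symm)

lemma exists_smul_ne (h : SharplyTwoTransitive G X) {g : G} (hg : g ≠ 1) :
    ∃ x : X, g • x ≠ x := by
  have : Nontrivial X := h.1
  obtain ⟨a, b, hab⟩ := exists_pair_ne X
  by_contra! hfix
  exact hg (h.eq_one_of_smul_eq_self hab (hfix a) (hfix b))

lemma exists_smul_eq (h : SharplyTwoTransitive G X) (a b : X) : ∃ g : G, g • a = b := by
  have : Nontrivial X := h.1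
  obtain ⟨a', ha'⟩ := exists_ne a
  obtain ⟨b', hb'⟩ := exists_ne b
  obtain ⟨g, ⟨hg, -⟩, -⟩ := h.2 a a' b b' ha'.symm hb'.symm
  exact ⟨g, hg⟩

lemma eq_of_smul_eq_self_of_smul_eq_self (h : SharplyTwoTransitive G X) {u : G}
    (hu : IsInvolution u) {a b : X} (ha : u • a = a) (hb : u • b = b) : a = b := by
  by_contra hab
  exact hu.ne_one (h.eq_one_of_smul_eq_self hab ha hb)

/-- Both sides swap `b` and `v • b`. -/
lemma conj_eq_of_smul_eq (h : SharplyTwoTransitive G X) {u v g : G} (hu : IsInvolution u)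
    (hv : IsInvolution v) {a b : X} (hb : v • b ≠ b) (hga : g • a = b)
    (hgua : g • u • a = v • b) : g * u * g⁻¹ = v := by
  have ha : g⁻¹ • b = a := by rw [← hga, inv_smul_smul]
  refine h.eq_of_smul_eq_of_smul_eq hb.symm ?_ ?_
  · rw [mul_smul, mul_smul, ha, hgua]
  · rw [hv.smul_smul, mul_smul, mul_smul, ← hgua, inv_smul_smul, hu.smul_smul, hga]

lemma exists_conj_eq (h : SharplyTwoTransitive G X) {u v : G} (hu : IsInvolution u)
    (hv : IsInvolution v) : ∃ g : G, g * u * g⁻¹ = v := by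
  obtain ⟨a, ha⟩ := h.exists_smul_ne hu.ne_one
  obtain ⟨b, hb⟩ := h.exists_smul_ne hv.ne_one
  obtain ⟨g, ⟨hga, hgua⟩, -⟩ := h.2 a (u • a) b (v • b) ha.symm hb.symm
  exact ⟨g, h.conj_eq_of_smul_eq hu hv hb hga hgua⟩

lemma exists_smul_eq_self (h : SharplyTwoTransitive G X) {u : G} (hu : IsInvolution u) {x : X}
    (hx : u • x = x) {v : G} (hv : IsInvolution v) : ∃ p : X, v • p = p := by
  obtain ⟨g, rfl⟩ := h.exists_conj_eq hu hv
  exact ⟨g • x, conj_smul_smul_eq_self hx g⟩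

lemma exists_isInvolution_smul_eq_self (h : SharplyTwoTransitive G X) {u : G}
    (hu : IsInvolution u) {x : X} (hx : u • x = x) (p : X) :
    ∃ v : G, IsInvolution v ∧ v • p = p := by
  obtain ⟨g, rfl⟩ := h.exists_smul_eq x p
  exact ⟨g * u * g⁻¹, hu.conj g, conj_smul_smul_eq_self hx g⟩

/-- The conjugator is chosen to fix a second point `y`, and is then forced to fix `p` as well. -/
lemma eq_of_isInvolution_of_smul_eq_self (h : SharplyTwoTransitive G X) {u v : G}
    (hu : IsInvolution u) (hv : IsInvolution v) {p : X} (hup : u • p = p) (hvp : v • p = p) :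
    u = v := by
  have : Nontrivial X := h.1
  obtain ⟨y, hyp⟩ := exists_ne p
  have huy : u • y ≠ y := fun hy ↦ hu.ne_one (h.eq_one_of_smul_eq_self hyp.symm hup hy)
  have hvy : v • y ≠ y := fun hy ↦ hv.ne_one (h.eq_one_of_smul_eq_self hyp.symm hvp hy)
  obtain ⟨g, ⟨hgy, hguy⟩, -⟩ := h.2 y (u • y) y (v • y) huy.symm hvy.symm
  have hconj : g * u * g⁻¹ = v := h.conj_eq_of_smul_eq hu hv hvy hgy hguy
  have hgp : g • p = p :=
    h.eq_of_smul_eq_self_of_smul_eq_self hv (hconj ▸ conj_smul_smul_eq_self hup g) hvp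
  rw [← hconj, h.eq_one_of_smul_eq_self hyp hgy hgp]
  group

lemma conj_eq_iff_smul_eq (h : SharplyTwoTransitive G X) {u u' : G} (hu : IsInvolution u)
    (hu' : IsInvolution u') {p p' : X} (hp : u • p = p) (hp' : u' • p' = p') (g : G) :
    g * u * g⁻¹ = u' ↔ g • p = p' := by
  constructor
  · rintro rfl
    exact h.eq_of_smul_eq_self_of_smul_eq_self hu' (conj_smul_smul_eq_self hp g) hp'
  · rintro rfl
    exact h.eq_of_isInvolution_of_smul_eq_self (hu.conj g) hu' (conj_smul_smul_eq_self hp g) hp'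

end SharplyTwoTransitive

/-- If `G` acts sharply 2-transitively on `X` and the action is not of characteristic 2
(some involution has a fixed point), then the set of involutions of `G` has at least two
elements and the conjugation action of `G` on it is sharply 2-transitive. -/
theorem stmt_10 {G X : Type*} [Group G] [MulAction G X]
    (h2t : SharplyTwoTransitive G X)
    (hchar : ∃ (u : G) (x : X), IsInvolution u ∧ u • x = x) :
    InvolutionsSharplyTwoTransitive G := by
  obtain ⟨w, x, hw, hwx⟩ := hchar
  refine ⟨?_, fun u v u' v' hu hv hu' hv' huv hu'v' ↦ ?_⟩
  · have : Nontrivial X := h2t.1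
    obtain ⟨p, q, hpq⟩ := exists_pair_ne X
    obtain ⟨u, hu, hup⟩ := h2t.exists_isInvolution_smul_eq_self hw hwx p
    obtain ⟨v, hv, hvq⟩ := h2t.exists_isInvolution_smul_eq_self hw hwx q
    refine ⟨u, v, hu, hv, ?_⟩
    rintro rfl
    exact hpq (h2t.eq_of_smul_eq_self_of_smul_eq_self hu hup hvq)
  obtain ⟨p, hp⟩ := h2t.exists_smul_eq_self hw hwx hu
  obtain ⟨q, hq⟩ := h2t.exists_smul_eq_self hw hwx hv
  obtain ⟨p', hp'⟩ := h2t.exists_smul_eq_self hw hwx hu'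
  obtain ⟨q', hq'⟩ := h2t.exists_smul_eq_self hw hwx hv'
  have hpq : p ≠ q := by
    rintro rfl
    exact huv (h2t.eq_of_isInvolution_of_smul_eq_self hu hv hp hq)
  have hp'q' : p' ≠ q' := by
    rintro rfl
    exact hu'v' (h2t.eq_of_isInvolution_of_smul_eq_self hu' hv' hp' hq')
  refine (existsUnique_congr fun g ↦ ?_).mpr (h2t.2 p q p' q' hpq hp'q')
  exact and_congr (h2t.conj_eq_iff_smul_eq hu hu' hp hp' g)
    (h2t.conj_eq_iff_smul_eq hv hv' hq hq' g)
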